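/- Suppose each hysteretic load j switches on when ω_j > ω^1_j and off when ω_j < ω^0_j, with ω^1_j > ω^0_j > 0. If ω^1_j - ω^0_j ≥ d̄_j / D for all j ∈ N, where D = Σ_j (α_j + A_j), then for every load vector p^L ∈ ℝ^{|N|} there exists a pair (ω*, σ*) with σ* ∈ {0,1}^{|N|} and ω* = (-ℓ - Σ_j d̄_j σ*_j)/D such that for every j: if σ*_j = 0 then ω* ≤ ω^1_j, and if σ*_j = 1 then ω* ≥ ω^0_j (i.e., no load's hysteresis condition is violated). -/

import Mathlib

/-!
Switch loads on greedily: while some load that is off sees a frequency above its upper threshold,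
switch on the violator with the smallest lower threshold. Each switch lowers the frequency by
`d̄_j / D`, which by the gap condition keeps the frequency above `ω^0_j`; and since the violators
are switched on in increasing order of `ω^0` while the frequency only decreases, every load
already on had an `ω^0` no larger, so it stays admissible too. The process stops after at most
`|N|` steps at a consistent configuration.
-/

open Finset

namespace Hysteresis

variable {ι : Type*} (c : ℝ) (δ lo hi : ι → ℝ)

/-- The frequency `ω*` once the loads in `S` are switched on. -/
def freq (S : Finset ι) : ℝ := c - ∑ i ∈ S, δ i

def IsConsistent (S : Finset ι) : Prop :=
  (∀ k ∈ S, lo k ≤ freq c δ S) ∧ ∀ j ∉ S, freq c δ S ≤ hi j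

def IsViolator (S : Finset ι) (j : ι) : Prop :=
  j ∉ S ∧ hi j < freq c δ S

def IsGreedyStage (S : Finset ι) : Prop :=
  (∀ k ∈ S, lo k ≤ freq c δ S) ∧ ∀ k ∈ S, ∀ j, IsViolator c δ hi S j → lo k ≤ lo j

variable {c δ lo hi}

theorem isGreedyStage_empty : IsGreedyStage c δ lo hi ∅ := by
  simp [IsGreedyStage]

variable [DecidableEq ι] {S : Finset ι} {j : ι}

theorem freq_insert (hj : j ∉ S) : freq c δ (insert j S) = freq c δ S - δ j := by
  simp only [freq, sum_insert hj]
  ring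

theorem IsViolator.of_insert (hδ : 0 ≤ δ j) (hj : j ∉ S) {i : ι}
    (hvi : IsViolator c δ hi (insert j S) i) : IsViolator c δ hi S i := by
  refine ⟨fun h => hvi.1 (mem_insert_of_mem h), ?_⟩
  linarith [hvi.2, freq_insert (c := c) (δ := δ) hj]

theorem IsGreedyStage.insert_of_isViolator (hS : IsGreedyStage c δ lo hi S) (hj : IsViolator c δ hi S j)
    (hmin : ∀ i, IsViolator c δ hi S i → lo j ≤ lo i)
    (hδ : 0 ≤ δ j) (hgap : δ j ≤ hi j - lo j) :
    IsGreedyStage c δ lo hi (insert j S) := by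
  have hj_on : lo j ≤ freq c δ (insert j S) := by
    rw [freq_insert hj.1]
    linarith [hj.2]
  refine ⟨fun k hk => ?_, fun k hk i hvi => ?_⟩
  · rcases mem_insert.1 hk with rfl | hkS
    · exact hj_on
    · exact (hS.2 k hkS j hj).trans hj_on
  · have hvi' := hvi.of_insert hδ hj.1
    rcases mem_insert.1 hk with rfl | hkS
    · exact hmin i hvi'
    · exact (hS.2 k hkS j hj).trans (hmin i hvi')

omit [DecidableEq ι] in
/-- A greedy stage with the most loads switched on has no violator left. -/
theorem exists_isConsistent [Fintype ι] (hδ : ∀ j, 0 ≤ δ j) (hgap : ∀ j, δ j ≤ hi j - lo j) :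
    ∃ S, IsConsistent c δ lo hi S := by
  classical
  obtain ⟨T, hT, hmax⟩ := (univ.powerset.filter (IsGreedyStage c δ lo hi)).exists_max_image
    card ⟨∅, mem_filter.2 ⟨empty_mem_powerset _, isGreedyStage_empty⟩⟩
  have hTstage := (mem_filter.1 hT).2
  refine ⟨T, hTstage.1, fun j hj => ?_⟩
  by_contra! hlt
  obtain ⟨j₀, hj₀, hmin⟩ := (univ.filter (IsViolator c δ hi T)).exists_min_image lo
    ⟨j, mem_filter.2 ⟨mem_univ _, hj, hlt⟩⟩
  have hj₀ := (mem_filter.1 hj₀).2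
  have hstage := hTstage.insert_of_isViolator hj₀ (fun i hvi => hmin i (mem_filter.2 ⟨mem_univ _, hvi⟩))
    (hδ j₀) (hgap j₀)
  have := hmax _ (mem_filter.2 ⟨mem_powerset.2 (subset_univ _), hstage⟩)
  rw [card_insert_of_notMem hj₀.1] at this
  omega

end Hysteresis

theorem stmt_2_general {N : Type*} [Fintype N]
    (dbar ω0 ω1 α A pL : N → ℝ)
    (hd : ∀ j, 0 < dbar j)
    (hα : ∀ j, 0 < α j) (hA : ∀ j, 0 < A j)
    (hgap : ∀ j, ω1 j - ω0 j ≥ dbar j / (∑ k, (α k + A k))) :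
    ∃ σ : N → ℝ, (∀ j, σ j = 0 ∨ σ j = 1) ∧
      ∀ j : N,
        (σ j = 0 →
          (-(∑ i, pL i) - ∑ i, dbar i * σ i) / (∑ k, (α k + A k)) ≤ ω1 j) ∧
        (σ j = 1 →
          (-(∑ i, pL i) - ∑ i, dbar i * σ i) / (∑ k, (α k + A k)) ≥ ω0 j) := by
  classical
  set D := ∑ k, (α k + A k)
  have hD : 0 ≤ D := sum_nonneg fun k _ => (add_pos (hα k) (hA k)).le
  obtain ⟨T, hon, hoff⟩ := Hysteresis.exists_isConsistent (c := -(∑ i, pL i) / D)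
    (δ := fun j => dbar j / D) (lo := ω0) (hi := ω1)
    (fun j => div_nonneg (hd j).le hD) (fun j => by linarith [hgap j])
  have hfreq : (-(∑ i, pL i) - ∑ i, dbar i * (if i ∈ T then 1 else 0)) / D
      = Hysteresis.freq (-(∑ i, pL i) / D) (fun j => dbar j / D) T := by
    simp only [mul_ite, mul_one, mul_zero, sum_ite_mem, univ_inter, Hysteresis.freq, sub_div,
      sum_div]
  refine ⟨fun i => if i ∈ T then 1 else 0, fun j => by by_cases h : j ∈ T <;> simp [h],
    fun j => ⟨fun hj => ?_, fun hj => ?_⟩⟩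
  · rw [hfreq]
    exact hoff j (by simpa using hj)
  · rw [hfreq]
    exact hon j (by simpa using hj)

/-- If ω^1_j - ω^0_j ≥ d̄_j / D for all j, then for every load vector p^L there exists an
equilibrium pair (ω*, σ*) with σ* ∈ {0,1}^N and ω* = (-ℓ - Σ_j d̄_j σ*_j)/D such that
no load's hysteresis condition is violated. -/
theorem stmt_2 {N : Type*} [Fintype N]
    (dbar ω0 ω1 α A pL : N → ℝ)
    (hd : ∀ j, 0 < dbar j)
    (hα : ∀ j, 0 < α j) (hA : ∀ j, 0 < A j)
    (hth : ∀ j, 0 < ω0 j ∧ ω0 j < ω1 j)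
    (hgap : ∀ j, ω1 j - ω0 j ≥ dbar j / (∑ k, (α k + A k))) :
    ∃ σ : N → ℝ, (∀ j, σ j = 0 ∨ σ j = 1) ∧
      ∀ j : N,
        (σ j = 0 →
          (-(∑ i, pL i) - ∑ i, dbar i * σ i) / (∑ k, (α k + A k)) ≤ ω1 j) ∧
        (σ j = 1 →
          (-(∑ i, pL i) - ∑ i, dbar i * σ i) / (∑ k, (α k + A k)) ≥ ω0 j) :=
  stmt_2_general dbar ω0 ω1 α A pL hd hα hA hgap
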